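/- Write Ω(x) = {u | Hu ≤ h, F(Ax + Bu) ≤ g} with g having nonzero entries, and suppose Kx ∈ Ω(x) for all x ∈ S. If x ∈ int(S) and some constraint is active at u* = Kx, i.e., Fᵢᵀ(A + BK)x = gᵢ for some i, then there exists y ∈ int(S) with Ky ∉ Ω(y), contradicting safety of the linear policy. Hence no constraint of the form Fᵢᵀ(Ax+Bu) ≤ gᵢ is active at Kx for x ∈ int(S). -/

import Mathlib

/-! If the constraint were active at `x`, then along the ray through `x` its value `t * gᵢ`
would be maximal at `t = 1` among the safe points `t • x`, which fill a neighbourhood of `t = 1`;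
a linear function of `t` with slope `gᵢ ≠ 0` has no such local maximum. -/

open Matrix Filter Topology

theorem eq_zero_of_isLocalMax_mul_const {a c : ℝ} (h : IsLocalMax (fun t => t * c) a) :
    c = 0 :=
  h.hasDerivAt_eq_zero (hasDerivAt_mul_const c)

theorem eventually_smul_mem_of_mem_interior {E : Type*} [TopologicalSpace E] [AddCommMonoid E]
    [Module ℝ E] [ContinuousSMul ℝ E] {S : Set E} {x : E} (hx : x ∈ interior S) :
    ∀ᶠ t in 𝓝 (1 : ℝ), t • x ∈ S :=
  (continuous_id.smul continuous_const).tendsto' 1 x (one_smul ℝ x)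
    |>.eventually (mem_interior_iff_mem_nhds.1 hx)

theorem dotProduct_closedLoop_smul {R ι κ : Type*} [CommSemiring R] [Fintype ι] [Fintype κ]
    (A : Matrix ι ι R) (B : Matrix ι κ R) (K : Matrix κ ι R) (f x : ι → R) (t : R) :
    f ⬝ᵥ (A *ᵥ (t • x) + B *ᵥ (K *ᵥ (t • x))) = t * f ⬝ᵥ (A *ᵥ x + B *ᵥ (K *ᵥ x)) := by
  rw [mulVec_smul, mulVec_smul, mulVec_smul, ← smul_add, dotProduct_smul, smul_eq_mul]

theorem no_active_constraint_at_interior_general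
    (n m q r : ℕ)
    (A : Matrix (Fin n) (Fin n) ℝ) (B : Matrix (Fin n) (Fin m) ℝ)
    (K : Matrix (Fin m) (Fin n) ℝ)
    (H : Fin q → (Fin m → ℝ)) (h : Fin q → ℝ)
    (F : Fin r → (Fin n → ℝ)) (g : Fin r → ℝ)
    (S : Set (Fin n → ℝ))
    (Ω : (Fin n → ℝ) → Set (Fin m → ℝ))
    (hΩ : ∀ x, Ω x = {u | (∀ j, H j ⬝ᵥ u ≤ h j) ∧ ∀ i, F i ⬝ᵥ (A *ᵥ x + B *ᵥ u) ≤ g i})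
    (hg : ∀ i, g i ≠ 0)
    (hsafe : ∀ x ∈ S, K *ᵥ x ∈ Ω x)
    (x : Fin n → ℝ) (hx : x ∈ interior S) :
    ∀ i, F i ⬝ᵥ (A *ᵥ x + B *ᵥ (K *ᵥ x)) ≠ g i := by
  intro i hactive
  have hmax : IsLocalMax (fun t : ℝ => t * g i) 1 := by
    filter_upwards [eventually_smul_mem_of_mem_interior hx] with t ht
    have hsafe_t := (hΩ (t • x) ▸ hsafe (t • x) ht).2 i
    rw [dotProduct_closedLoop_smul, hactive] at hsafe_t
    rwa [one_mul]
  exact hg i (eq_zero_of_isLocalMax_mul_const hmax)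

/-- With `Ω(x) = {u | Hu ≤ h, F(Ax+Bu) ≤ g}` (entries of `g` nonzero), a safe linear
policy `Kx ∈ Ω(x)` for all `x ∈ S`, and `x ∈ int S`: no constraint
`Fᵢᵀ(Ax + Bu) ≤ gᵢ` is active at `u = Kx`, for otherwise some `y ∈ int S` would
satisfy `Ky ∉ Ω(y)`, contradicting safety. -/
theorem no_active_constraint_at_interior
    (n m q r rs : ℕ)
    (A : Matrix (Fin n) (Fin n) ℝ) (B : Matrix (Fin n) (Fin m) ℝ)
    (K : Matrix (Fin m) (Fin n) ℝ)
    (H : Fin q → (Fin m → ℝ)) (h : Fin q → ℝ)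
    (F : Fin r → (Fin n → ℝ)) (g : Fin r → ℝ)
    (Vs : Matrix (Fin rs) (Fin n) ℝ) (sbar : Fin rs → ℝ)
    (S : Set (Fin n → ℝ))
    (hS : S = {x | ∀ i, -sbar i ≤ (Vs *ᵥ x) i ∧ (Vs *ᵥ x) i ≤ sbar i})
    (Ω : (Fin n → ℝ) → Set (Fin m → ℝ))
    (hΩ : ∀ x, Ω x = {u | (∀ j, H j ⬝ᵥ u ≤ h j) ∧ ∀ i, F i ⬝ᵥ (A *ᵥ x + B *ᵥ u) ≤ g i})
    (hg : ∀ i, g i ≠ 0)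
    (hsafe : ∀ x ∈ S, K *ᵥ x ∈ Ω x)
    (x : Fin n → ℝ) (hx : x ∈ interior S) :
    ∀ i, F i ⬝ᵥ (A *ᵥ x + B *ᵥ (K *ᵥ x)) ≠ g i :=
  no_active_constraint_at_interior_general n m q r A B K H h F g S Ω hΩ hg hsafe x hx
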